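/- arXiv:nlin/0604070 — 2 statements merged into one kernel-verified Lean document; each statement's English description precedes it below -/
import Mathlib

section
/- Fix natural numbers r ≤ n and an integer d. Let L[f] = Σ_{i=0}^{r} a_i(x)·f^{(i)} with a_0, …, a_r ∈ ℝ[x] be a nonzero operator such that: (a) L[f] has degree at most n − r for every f of degree at most n (maximal deficiency), and (b) for every natural number k, L[x^k] is a real scalar multiple of x^{k+d} (degree d), interpreting this as L[x^k] = 0 when k + d < 0. Then −r ≤ d ≤ 0, and setting j := −d, there is a nonzero constant c ∈ ℝ such that L[f] = c·K_{rj}[f] for every f ∈ ℝ[x]; i.e., up to a nonzero scalar multiple K_{rj} is the unique r-th order maximal deficiency operator with polynomial coefficients of degree −j. -/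
open Polynomial

/-- The operator `xD : p ↦ x·p'`. -/
noncomputable def xD : ℝ[X] →ₗ[ℝ] ℝ[X] :=
  (LinearMap.mulLeft ℝ (X : ℝ[X])).comp (Polynomial.derivative : ℝ[X] →ₗ[ℝ] ℝ[X])

/-- The Pochhammer operator `(a − xD)_k = (a − xD)∘((a−1) − xD)∘⋯∘((a−k+1) − xD)`,
the identity when `k = 0`. -/
noncomputable def pochOp (a : ℤ) : ℕ → (ℝ[X] →ₗ[ℝ] ℝ[X])
  | 0 => LinearMap.id
  | k + 1 => ((a : ℝ) • (LinearMap.id : ℝ[X] →ₗ[ℝ] ℝ[X]) - xD).comp (pochOp (a - 1) k)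

/-- Differentiation as an endomorphism of `ℝ[X]`. -/
noncomputable def Dlm : Module.End ℝ ℝ[X] := (Polynomial.derivative : ℝ[X] →ₗ[ℝ] ℝ[X])

/-- The maximal deficiency operator `K_{rj} = (1/(r−j)!)·(n−j−xD)_{r−j} ∘ D^j`. -/
noncomputable def Kop (n r j : ℕ) : ℝ[X] →ₗ[ℝ] ℝ[X] :=
  (((r - j).factorial : ℝ))⁻¹ • ((pochOp ((n : ℤ) - j) (r - j)).comp (Dlm ^ j))

lemma xD_X_pow (t : ℕ) : xD (X ^ t : ℝ[X]) = (t : ℝ) • X ^ t := by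
  simp only [xD, LinearMap.comp_apply, LinearMap.mulLeft_apply, derivative_X_pow]
  cases t with
  | zero => simp
  | succ m =>
    rw [smul_eq_C_mul, mul_left_comm, ← pow_succ']
    simp

lemma pochOp_X_pow (m : ℕ) (a : ℤ) (t : ℕ) :
    pochOp a m (X ^ t : ℝ[X]) = (∏ s ∈ Finset.range m, ((a : ℝ) - s - t)) • X ^ t := by
  induction m generalizing a with
  | zero => simp [pochOp]
  | succ m ih =>
    rw [pochOp, LinearMap.comp_apply, ih (a - 1)]
    rw [map_smul, LinearMap.sub_apply, LinearMap.smul_apply, LinearMap.id_apply, xD_X_pow,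
      ← sub_smul, smul_smul]
    congr 1
    rw [Finset.prod_range_succ']
    push_cast
    rw [sub_zero]
    exact congrArg (· * ((a : ℝ) - t)) (Finset.prod_congr rfl fun x _ => by ring)

lemma Kop_X_pow (n r j k : ℕ) :
    Kop n r j (X ^ k : ℝ[X]) =
      ((((r - j).factorial : ℝ))⁻¹ * ((k.descFactorial j : ℝ) *
        ∏ s ∈ Finset.range (r - j), ((n : ℝ) - j - s - ((k - j : ℕ) : ℝ)))) • X ^ (k - j) := by
  rw [Kop, LinearMap.smul_apply, LinearMap.comp_apply]
  have hD : (Dlm ^ j) (X ^ k : ℝ[X]) = (k.descFactorial j : ℝ) • X ^ (k - j) := by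
    rw [Dlm, Module.End.pow_apply, iterate_derivative_X_pow_eq_smul]
  rw [hD, map_smul, pochOp_X_pow]
  rw [smul_smul, smul_smul]
  congr 1
  push_cast
  ring

lemma prod_range_cast_sub_eq_descFactorial (k j : ℕ) (h : j ≤ k) :
    ∏ t ∈ Finset.range j, ((k : ℝ) - t) = (k.descFactorial j : ℝ) := by
  induction j with
  | zero => simp
  | succ m ih =>
    rw [Finset.prod_range_succ, ih (by omega), Nat.descFactorial_succ, Nat.cast_mul,
      Nat.cast_sub (by omega)]
    ring


/-- A nonzero operator `L[f] = ∑_{i=0}^r a_i(x) f^{(i)}` (`r ≤ n`) of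
maximal deficiency (mapping `P_n` into `P_{n−r}`) and of degree `d` (mapping `x^k` to a
scalar multiple of `x^{k+d}`, with `L[x^k] = 0` when `k + d < 0`) satisfies `−r ≤ d ≤ 0`
and is a nonzero constant multiple of `K_{r,−d}`. -/
theorem maximal_deficiency_unique (n r : ℕ) (hrn : r ≤ n) (d : ℤ) (a : ℕ → ℝ[X])
    (L : ℝ[X] → ℝ[X])
    (hLdef : ∀ f : ℝ[X], L f = ∑ i ∈ Finset.range (r + 1), a i * derivative^[i] f)
    (hL0 : L ≠ 0)
    (hdefi : ∀ f ∈ degreeLE ℝ (n : WithBot ℕ), L f ∈ degreeLE ℝ ((n - r : ℕ) : WithBot ℕ))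
    (hdeg : ∀ k : ℕ,
      (0 ≤ (k : ℤ) + d → ∃ c : ℝ, L (X ^ k) = c • X ^ ((k : ℤ) + d).toNat) ∧
      ((k : ℤ) + d < 0 → L (X ^ k) = 0)) :
    (-(r : ℤ) ≤ d ∧ d ≤ 0) ∧ ∃ c : ℝ, c ≠ 0 ∧ ∀ f : ℝ[X], L f = c • Kop n r (-d).toNat f := by

  classical
  set Llin : ℝ[X] →ₗ[ℝ] ℝ[X] :=
    ∑ i ∈ Finset.range (r + 1), (LinearMap.mulLeft ℝ (a i)) ∘ₗ (Dlm ^ i) with hLlin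
  have hLeq : ∀ f, L f = Llin f := by
    intro f
    rw [hLdef, hLlin]
    simp [LinearMap.sum_apply, LinearMap.comp_apply, LinearMap.mulLeft_apply, Dlm,
      Module.End.pow_apply]
  set b : ℕ → ℝ := fun i => if h : 0 ≤ (i : ℤ) + d then (a i).coeff ((i : ℤ) + d).toNat else 0
    with hb
  set Q : ℝ[X] := ∑ i ∈ Finset.range (r + 1), C (b i) * descPochhammer ℝ i with hQ
  have hQdeg : Q.degree ≤ (r : WithBot ℕ) := by
    rw [hQ]
    refine (Polynomial.degree_sum_le _ _).trans (Finset.sup_le fun i hi => ?_)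
    refine (degree_mul_le _ _).trans (le_trans (add_le_add degree_C_le degree_le_natDegree) ?_)
    rw [descPochhammer_natDegree, zero_add]
    exact_mod_cast Finset.mem_range_succ_iff.mp hi
  have hQeval : ∀ k : ℕ, 0 ≤ (k : ℤ) + d →
      (L (X ^ k)).coeff ((k : ℤ) + d).toNat = Q.eval (k : ℝ) := by
    intro k hk
    have hM : ((((k : ℤ) + d).toNat : ℕ) : ℤ) = (k : ℤ) + d := Int.toNat_of_nonneg hk
    rw [hLdef, hQ, finset_sum_coeff, eval_finset_sum]
    refine Finset.sum_congr rfl fun i hi => ?_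
    rw [eval_mul, eval_C, descPochhammer_eval_eq_descFactorial]
    rw [iterate_derivative_X_pow_eq_C_mul]
    rw [show a i * (C ((k.descFactorial i : ℝ)) * X ^ (k - i)) =
        (C ((k.descFactorial i : ℝ)) * a i) * X ^ (k - i) by ring]
    rw [coeff_mul_X_pow', coeff_C_mul]
    by_cases hki : k < i
    · rw [Nat.descFactorial_eq_zero_iff_lt.mpr hki]
      push_cast
      split_ifs <;> simp
    · push_neg at hki
      by_cases hid : 0 ≤ (i : ℤ) + d
      · have hid' := Int.toNat_of_nonneg hid
        rw [if_pos (by omega : k - i ≤ ((k : ℤ) + d).toNat)]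
        rw [show ((k : ℤ) + d).toNat - (k - i) = ((i : ℤ) + d).toNat by omega]
        simp only [hb]
        rw [dif_pos hid]
        ring
      · rw [if_neg (by omega : ¬ (k - i ≤ ((k : ℤ) + d).toNat))]
        simp only [hb]
        rw [dif_neg hid]
        ring
  have hQlow : ∀ k : ℕ, (k : ℤ) + d < 0 → Q.eval (k : ℝ) = 0 := by
    intro k hk
    rw [hQ, eval_finset_sum]
    refine Finset.sum_eq_zero fun i hi => ?_
    rw [eval_mul, eval_C, descPochhammer_eval_eq_descFactorial]
    rcases lt_or_ge k i with h | h
    · rw [Nat.descFactorial_eq_zero_iff_lt.mpr h]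
      simp
    · have hneg : ¬ 0 ≤ (i : ℤ) + d := by omega
      simp only [hb]
      rw [dif_neg hneg, zero_mul]
  have hQne : ∃ k : ℕ, Q.eval (k : ℝ) ≠ 0 := by
    by_contra hcon
    push_neg at hcon
    apply hL0
    have hmon : ∀ k : ℕ, L (X ^ k) = 0 := by
      intro k
      by_cases hk : 0 ≤ (k : ℤ) + d
      · obtain ⟨cc, hcc⟩ := (hdeg k).1 hk
        have h1 := hQeval k hk
        rw [hcc, coeff_smul, coeff_X_pow, if_pos rfl, smul_eq_mul, mul_one, hcon k] at h1
        rw [hcc, h1, zero_smul]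
      · exact (hdeg k).2 (by omega)
    have hall : ∀ f, Llin f = 0 := by
      intro f
      induction f using Polynomial.induction_on' with
      | add p q hp hq => rw [map_add, hp, hq, add_zero]
      | monomial m t =>
        rw [← C_mul_X_pow_eq_monomial, ← smul_eq_C_mul, map_smul, ← hLeq, hmon, smul_zero]
    funext f
    simp [hLeq f, hall f]
  have hroot : ∀ k : ℕ, k ≤ n → (n : ℤ) - r < (k : ℤ) + d → Q.eval (k : ℝ) = 0 := by
    intro k hkn hkd
    have hk0 : 0 ≤ (k : ℤ) + d := by omega
    rw [← hQeval k hk0]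
    refine coeff_eq_zero_of_degree_lt ?_
    have hmem := hdefi (X ^ k) (by
      rw [Polynomial.mem_degreeLE, degree_X_pow]
      exact_mod_cast hkn)
    rw [Polynomial.mem_degreeLE] at hmem
    refine lt_of_le_of_lt hmem ?_
    exact_mod_cast (show (n - r : ℕ) < ((k : ℤ) + d).toNat by omega)
  have hd0 : d ≤ 0 := by
    by_contra hpos
    push_neg at hpos
    obtain ⟨k0, hk0⟩ := hQne
    apply hk0
    have hQ0 : Q = 0 := by
      refine Polynomial.eq_zero_of_degree_lt_of_eval_index_eq_zero
        (v := fun t : ℕ => (t : ℝ)) (Finset.Icc (n + 1 - r - d.toNat) n)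
        (fun x _ y _ h => Nat.cast_injective h) ?_ ?_
      · have hcard : r + 1 ≤ (Finset.Icc (n + 1 - r - d.toNat) n).card := by
          rw [Nat.card_Icc]
          omega
        refine lt_of_le_of_lt hQdeg ?_
        exact_mod_cast (show r < (Finset.Icc (n + 1 - r - d.toNat) n).card by omega)
      · intro k hk
        rw [Finset.mem_Icc] at hk
        exact hroot k hk.2 (by omega)
    rw [hQ0, eval_zero]
  have hdr : -(r : ℤ) ≤ d := by
    by_contra hlt
    push_neg at hlt
    obtain ⟨k0, hk0⟩ := hQne
    apply hk0
    have hQ0 : Q = 0 := by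
      rw [hQ]
      refine Finset.sum_eq_zero fun i hi => ?_
      have hneg : ¬ 0 ≤ (i : ℤ) + d := by
        rw [Finset.mem_range] at hi
        omega
      simp only [hb]
      rw [dif_neg hneg, map_zero, zero_mul]
    rw [hQ0, eval_zero]
  refine ⟨⟨hdr, hd0⟩, ?_⟩
  set j := (-d).toNat with hj
  have hjd : (j : ℤ) = -d := Int.toNat_of_nonneg (by omega)
  have hjr : j ≤ r := by omega
  set s0 : Finset ℕ :=
    Finset.range j ∪ Finset.image (fun s => n - s) (Finset.range (r - j)) with hs0
  have hinj : Set.InjOn (fun s => n - s) (Finset.range (r - j)) := by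
    intro x hx y hy h
    simp only [Finset.coe_range, Set.mem_Iio] at hx hy
    simp only at h
    omega
  have hdisj : Disjoint (Finset.range j)
      (Finset.image (fun s => n - s) (Finset.range (r - j))) := by
    rw [Finset.disjoint_left]
    intro t ht hmem
    rw [Finset.mem_range] at ht
    obtain ⟨s, hs, rfl⟩ := Finset.mem_image.mp hmem
    rw [Finset.mem_range] at hs
    omega
  have hcard : s0.card = r := by
    rw [hs0, Finset.card_union_of_disjoint hdisj, Finset.card_range,
      Finset.card_image_of_injOn hinj, Finset.card_range]
    omega
  have hs0root : ∀ t ∈ s0, Q.eval (t : ℝ) = 0 := by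
    intro t ht
    rw [hs0, Finset.mem_union] at ht
    rcases ht with ht | ht
    · rw [Finset.mem_range] at ht
      exact hQlow t (by omega)
    · obtain ⟨s, hs, rfl⟩ := Finset.mem_image.mp ht
      rw [Finset.mem_range] at hs
      exact hroot (n - s) (by omega) (by omega)
  set R : ℝ[X] := ∏ t ∈ s0, (X - C (t : ℝ)) with hRdef
  have hRmonic : R.Monic := monic_prod_of_monic _ _ fun t _ => monic_X_sub_C _
  have hRdeg : R.natDegree = r := by
    rw [hRdef, natDegree_prod _ _ (fun t _ => X_sub_C_ne_zero _)]
    simp only [natDegree_X_sub_C]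
    rw [Finset.sum_const, smul_eq_mul, mul_one]
    exact hcard
  have hReval : ∀ t ∈ s0, R.eval (t : ℝ) = 0 := by
    intro t ht
    rw [hRdef, eval_prod]
    exact Finset.prod_eq_zero ht (by simp)
  set c' := Q.coeff r with hc'def
  have hQR : Q = C c' * R := by
    have hdlt : (Q - C c' * R).degree < (s0.card : WithBot ℕ) := by
      rw [hcard, degree_lt_iff_coeff_zero]
      intro m hm
      rw [coeff_sub, coeff_C_mul]
      rcases eq_or_lt_of_le hm with hrm | hlt
      · have hR1 : R.coeff m = 1 := by
          rw [← hrm, ← hRdeg]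
          exact hRmonic.coeff_natDegree
        rw [hR1, mul_one, ← hrm, ← hc'def, sub_self]
      · have hQm : Q.coeff m = 0 :=
          coeff_eq_zero_of_degree_lt (lt_of_le_of_lt hQdeg (by exact_mod_cast hlt))
        have hRm : R.coeff m = 0 := by
          refine coeff_eq_zero_of_degree_lt ?_
          rw [Polynomial.degree_eq_natDegree hRmonic.ne_zero, hRdeg]
          exact_mod_cast hlt
        rw [hQm, hRm, mul_zero, sub_zero]
    have h0 := Polynomial.eq_zero_of_degree_lt_of_eval_index_eq_zero
      (v := fun t : ℕ => (t : ℝ)) s0 (fun x _ y _ h => Nat.cast_injective h) hdlt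
      (fun i hi => by rw [eval_sub, eval_mul, eval_C, hs0root i hi, hReval i hi, mul_zero,
        sub_zero])
    exact sub_eq_zero.mp h0
  have hcne : c' ≠ 0 := by
    intro h
    obtain ⟨k0, hk0⟩ := hQne
    apply hk0
    rw [hQR, h, map_zero, zero_mul, eval_zero]
  have hfac : ((r - j).factorial : ℝ) ≠ 0 := Nat.cast_ne_zero.mpr (Nat.factorial_ne_zero _)
  refine ⟨c' * (-1 : ℝ) ^ (r - j) * (r - j).factorial,
    mul_ne_zero (mul_ne_zero hcne (pow_ne_zero _ (by norm_num))) hfac, ?_⟩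
  have hmono : ∀ k : ℕ,
      L (X ^ k) = (c' * (-1 : ℝ) ^ (r - j) * (r - j).factorial) • Kop n r j (X ^ k) := by
    intro k
    rw [Kop_X_pow]
    rcases lt_or_ge k j with hkj | hkj
    · rw [(hdeg k).2 (by omega)]
      rw [Nat.descFactorial_eq_zero_iff_lt.mpr hkj]
      simp
    · have hk0 : 0 ≤ (k : ℤ) + d := by omega
      obtain ⟨ck, hck⟩ := (hdeg k).1 hk0
      have hMk : ((k : ℤ) + d).toNat = k - j := by omega
      have hckval : ck = Q.eval (k : ℝ) := by
        have h1 := hQeval k hk0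
        rw [hck, coeff_smul, coeff_X_pow, if_pos rfl, smul_eq_mul, mul_one] at h1
        exact h1
      rw [hck, hMk, hckval, hQR, smul_smul]
      congr 1
      rw [eval_mul, eval_C, hRdef, eval_prod]
      simp only [eval_sub, eval_X, eval_C]
      rw [hs0, Finset.prod_union hdisj,
        Finset.prod_image (fun x hx y hy h => hinj (Finset.mem_coe.mpr hx) (Finset.mem_coe.mpr hy) h),
        prod_range_cast_sub_eq_descFactorial k j hkj]
      have hprod : (∏ s ∈ Finset.range (r - j), ((n : ℝ) - j - s - ((k - j : ℕ) : ℝ)))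
          = (-1 : ℝ) ^ (r - j) * ∏ s ∈ Finset.range (r - j), ((k : ℝ) - ((n - s : ℕ) : ℝ)) := by
        rw [show ((-1 : ℝ) ^ (r - j)) = ∏ _s ∈ Finset.range (r - j), (-1 : ℝ) by
          rw [Finset.prod_const, Finset.card_range], ← Finset.prod_mul_distrib]
        refine Finset.prod_congr rfl fun s hs => ?_
        rw [Finset.mem_range] at hs
        rw [Nat.cast_sub (by omega : j ≤ k), Nat.cast_sub (by omega : s ≤ n)]
        ring
      rw [hprod]
      have hsq : ((-1 : ℝ) ^ (r - j)) * ((-1 : ℝ) ^ (r - j)) = 1 := by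
        rw [← mul_pow]; norm_num
      field_simp
      linear_combination (-((k.descFactorial j : ℝ) *
        (∏ s ∈ Finset.range (r - j), ((k : ℝ) - ((n - s : ℕ) : ℝ))))) * hsq
  intro f
  rw [hLeq]
  induction f using Polynomial.induction_on' with
  | add p q hp hq => rw [map_add, map_add, smul_add, hp, hq]
  | monomial m t =>
    rw [← C_mul_X_pow_eq_monomial, ← smul_eq_C_mul, map_smul, map_smul, ← hLeq, hmono,
      smul_comm]
end

section
/- For all natural numbers j ≤ r ≤ n and every polynomial f ∈ ℝ[x], one has K_{rj}[f] = Σ_{k=0}^{r−j} (−1)^k · C(n−k−j, n−r) · (x^k / k!) · f^{(k+j)}, where C(·,·) denotes the binomial coefficient. -/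
open Polynomial

/-- The key combinatorial identity. -/
lemma key_choose (a m k : ℕ) (hk : k ≤ m + 1) (ha : m + 1 ≤ a) :
    (a - k) * Nat.choose (a - 1 - k) (a - 1 - m) + k * Nat.choose (a - k) (a - 1 - m)
      = (m + 1) * Nat.choose (a - k) (a - m - 1) := by
  have ht : a - 1 - m = a - m - 1 := by omega
  rw [ht]
  have h1 : a - 1 - k = a - k - 1 := by omega
  rw [h1]
  set b := a - k with hb
  set t := a - m - 1 with htt
  have htb : t ≤ b := by omega
  have hbt : b * Nat.choose (b-1) t = (b - t) * Nat.choose b t := by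
    rcases Nat.eq_zero_or_pos b with h0 | h0
    · have : t = 0 := by omega
      simp [h0, this]
    · have e1 := Nat.add_one_mul_choose_eq (b-1) t
      have hb1 : b - 1 + 1 = b := by omega
      rw [hb1] at e1
      have e2 := Nat.choose_succ_right_eq b t
      rw [e1, e2, Nat.mul_comm]
  rw [hbt, ← add_mul]
  have : b - t + k = m + 1 := by omega
  rw [this]

/-- The coefficient appearing in the expansion of `pochOp`. -/
noncomputable def cc (a m k : ℕ) : ℝ :=
  (-1)^k * ((m.factorial : ℝ) / (k.factorial : ℝ)) * (((a - k).choose (a - m) : ℕ) : ℝ)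

lemma F_top (a m : ℕ) (ha : m + 1 ≤ a) :
    ((a:ℝ) - (m+1)) * cc (a-1) m (m+1) = 0 := by
  rcases eq_or_lt_of_le ha with h | h
  · have : ((a:ℝ) - (m+1)) = 0 := by
      rw [← h]; push_cast; ring
    rw [this, zero_mul]
  · have : (a - 1 - (m+1)).choose (a - 1 - m) = 0 :=
      Nat.choose_eq_zero_of_lt (by omega)
    simp [cc, this]

lemma coeff_zero (a m : ℕ) (ha : m + 1 ≤ a) :
    (a:ℝ) * cc (a-1) m 0 = cc a (m+1) 0 := by
  have hkey := key_choose a m 0 (by omega) ha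
  simp only [Nat.sub_zero] at hkey
  simp only [cc, Nat.sub_zero, pow_zero, Nat.factorial_zero, Nat.cast_one, div_one, one_mul]
  have h2 : a - (m+1) = a - m - 1 := by omega
  rw [h2, Nat.factorial_succ]
  have : ((a * ((a-1).choose (a-1-m)) : ℕ) : ℝ) = (((m+1) * ((a).choose (a-m-1)) : ℕ) : ℝ) := by
    exact_mod_cast congrArg Nat.cast (by simpa using hkey : a * (a - 1).choose (a - 1 - m) = (m + 1) * a.choose (a - m - 1))
  push_cast at this
  push_cast
  nlinarith [this]

lemma coeff_succ (a m k : ℕ) (hk : k ≤ m) (ha : m + 1 ≤ a) :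
    ((a:ℝ) - (k+1)) * cc (a-1) m (k+1) - cc (a-1) m k = cc a (m+1) (k+1) := by
  have hkey := key_choose a m (k+1) (by omega) ha
  have e2 : a - 1 - k = a - (k+1) := by omega
  have e3 : a - (m+1) = a - m - 1 := by omega
  have e4 : (a-1) - (k+1) = a - 1 - (k+1) := rfl
  simp only [cc, e2, e3]
  have hkc : ((a:ℝ) - (k+1)) * ((a - 1 - (k+1)).choose (a-1-m) : ℝ)
      + ((k:ℝ)+1) * ((a - (k+1)).choose (a-1-m) : ℝ)
      = ((m:ℝ)+1) * ((a - (k+1)).choose (a-m-1) : ℝ) := by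
    have hle : k + 1 ≤ a := by omega
    have := congrArg (Nat.cast (R := ℝ)) hkey
    push_cast [Nat.cast_sub hle] at this
    linarith [this]
  rw [Nat.factorial_succ k, Nat.factorial_succ m]
  push_cast
  set A := ((a - 1 - (k+1)).choose (a-1-m) : ℝ)
  set B := ((a - (k+1)).choose (a-1-m) : ℝ)
  set Cc := ((a - (k+1)).choose (a-m-1) : ℝ)
  have hk1 : ((k:ℝ)+1) ≠ 0 := by positivity
  have hu : ((k:ℝ)+1) * ((k:ℝ)+1)⁻¹ = 1 := mul_inv_cancel₀ hk1
  simp only [div_eq_mul_inv, mul_inv]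
  linear_combination ((-1)^(k+1) * (m.factorial:ℝ) * ((k:ℝ)+1)⁻¹ * (k.factorial:ℝ)⁻¹) * hkc
    - ((-1)^(k+1) * (m.factorial:ℝ) * (k.factorial:ℝ)⁻¹ * B) * hu

lemma xD_apply (p : ℝ[X]) : xD p = X * derivative p := rfl

lemma xD_pow_mul (k : ℕ) (h : ℝ[X]) :
    xD (X ^ k * h) = (k:ℝ) • (X ^ k * h) + X ^ (k+1) * derivative h := by
  cases k with
  | zero => simp [xD_apply]
  | succ k =>
    rw [xD_apply, derivative_mul, derivative_X_pow]
    simp only [Nat.add_sub_cancel, smul_eq_C_mul]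
    push_cast
    ring

lemma poch_expand (m : ℕ) : ∀ a : ℕ, m ≤ a → ∀ g : ℝ[X],
    pochOp (a : ℤ) m g = ∑ k ∈ Finset.range (m+1), cc a m k • (X ^ k * derivative^[k] g) := by
  induction m with
  | zero =>
    intro a _ g
    simp [pochOp, cc]
  | succ m ih =>
    intro a ha g
    have ha1 : m ≤ a - 1 := by omega
    have hc : (a:ℤ) - 1 = ((a - 1 : ℕ) : ℤ) := by omega
    have hstep : pochOp (a:ℤ) (m+1) g
        = (a:ℝ) • (pochOp ((a:ℤ) - 1) m g) - xD (pochOp ((a:ℤ) - 1) m g) := by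
      simp [pochOp]
    rw [hstep, hc, ih (a-1) ha1 g]
    set S : ℕ → ℝ[X] := fun k => X ^ k * derivative^[k] g with hS
    have hS1 : ∀ k, X ^ (k+1) * derivative (derivative^[k] g) = S (k+1) := by
      intro k
      simp only [hS, Function.iterate_succ_apply']
    rw [map_sum, Finset.smul_sum, ← Finset.sum_sub_distrib]
    have hterm : ∀ k ∈ Finset.range (m+1),
        (a:ℝ) • (cc (a-1) m k • S k) - xD (cc (a-1) m k • S k)
        = (((a:ℝ) - k) * cc (a-1) m k) • S k - cc (a-1) m k • S (k+1) := by
      intro k _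
      rw [map_smul, hS, xD_pow_mul, hS1]
      module
    rw [Finset.sum_congr rfl hterm, Finset.sum_sub_distrib]
    have hext : ∑ k ∈ Finset.range (m+1), (((a:ℝ) - k) * cc (a-1) m k) • S k
        = ∑ k ∈ Finset.range (m+2), (((a:ℝ) - k) * cc (a-1) m k) • S k := by
      rw [Finset.sum_range_succ (n := m+1)]
      have h0 : ((a:ℝ) - ((m+1:ℕ):ℝ)) * cc (a-1) m (m+1) = 0 := by
        push_cast
        have := F_top a m ha
        linarith
      rw [h0, zero_smul, add_zero]
    rw [hext, Finset.sum_range_succ' (fun k => (((a:ℝ) - k) * cc (a-1) m k) • S k) (m+1),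
        Finset.sum_range_succ' (fun k => cc a (m+1) k • S k) (m+1)]
    simp only [Nat.cast_zero, sub_zero, Nat.cast_add, Nat.cast_one]
    rw [coeff_zero a m ha]
    have : ∑ k ∈ Finset.range (m+1), (((a:ℝ) - (k+1)) * cc (a-1) m (k+1)) • S (k+1)
        - ∑ k ∈ Finset.range (m+1), cc (a-1) m k • S (k+1)
        = ∑ k ∈ Finset.range (m+1), cc a (m+1) (k+1) • S (k+1) := by
      rw [← Finset.sum_sub_distrib]
      refine Finset.sum_congr rfl fun k hk => ?_
      rw [← sub_smul, coeff_succ a m k (by simpa using Nat.lt_succ_iff.mp (Finset.mem_range.mp hk)) ha]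
    rw [← this]
    abel

/-- For `j ≤ r ≤ n` and every `f ∈ ℝ[x]`,
`K_{rj}[f] = ∑_{k=0}^{r−j} (−1)^k · C(n−k−j, n−r) · (x^k/k!) · f^{(k+j)}`. -/
theorem Kop_sum_expansion (n r j : ℕ) (hj : j ≤ r) (hr : r ≤ n) (f : ℝ[X]) :
    Kop n r j f = ∑ k ∈ Finset.range (r - j + 1),
      C ((-1 : ℝ) ^ k * ((n - k - j).choose (n - r) : ℝ) / (k.factorial : ℝ)) *
        X ^ k * derivative^[k + j] f := by
  have hDj : (Dlm ^ j) f = derivative^[j] f := Module.End.pow_apply _ j f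
  have hcast : (n:ℤ) - j = ((n - j : ℕ) : ℤ) := by omega
  have hK : Kop n r j f
      = ((r - j).factorial : ℝ)⁻¹ • (pochOp ((n:ℤ) - j) (r - j)) ((Dlm ^ j) f) := by
    simp [Kop]
  rw [hK, hDj, hcast, poch_expand (r - j) (n - j) (by omega) (derivative^[j] f),
      Finset.smul_sum]
  refine Finset.sum_congr rfl fun k hk => ?_
  have hkm : k ≤ r - j := Nat.lt_succ_iff.mp (Finset.mem_range.mp hk)
  have hiter : derivative^[k] (derivative^[j] f) = derivative^[k + j] f :=
    (Function.iterate_add_apply _ k j f).symm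
  rw [smul_smul, hiter]
  have hco : ((r - j).factorial : ℝ)⁻¹ * cc (n - j) (r - j) k
      = (-1 : ℝ) ^ k * ((n - k - j).choose (n - r) : ℝ) / (k.factorial : ℝ) := by
    have e1 : n - j - k = n - k - j := by omega
    have e2 : n - j - (r - j) = n - r := by omega
    have hne : ((r - j).factorial : ℝ) ≠ 0 := by
      exact_mod_cast (r - j).factorial_ne_zero
    have hne2 : (k.factorial : ℝ) ≠ 0 := by exact_mod_cast k.factorial_ne_zero
    simp only [cc, e1, e2]
    field_simp
  rw [hco, smul_eq_C_mul, mul_assoc]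
end
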